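/- Modularity inside the effect laws: if an action theory ⟨S, E, X, I⟩ satisfies Postulate PS*, then for any classical formulas A, C and any action a, S, E, X, I ⊨_⇝ A → [a]C holds if and only if S, E_a, I_a ⊨_⇝ A → [a]C holds. -/

import Mathlib

/-! Classical propositional formulas. -/
inductive PForm (α : Type) : Type
  | atom : α → PForm α
  | fls  : PForm α
  | not  : PForm α → PForm α
  | and  : PForm α → PForm α → PForm α
  | or   : PForm α → PForm α → PForm α
  | imp  : PForm α → PForm α → PForm α

def PForm.Sat {α : Type} (v : α → Prop) : PForm α → Prop
  | atom p => v p
  | fls => False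
  | not φ => ¬ Sat v φ
  | and φ ψ => Sat v φ ∧ Sat v ψ
  | or φ ψ => Sat v φ ∨ Sat v ψ
  | imp φ ψ => Sat v φ → Sat v ψ

/-- Classical (propositional) global consequence. -/
def EntailsCl {α : Type} (Γ : Set (PForm α)) (φ : PForm α) : Prop :=
  ∀ v : α → Prop, (∀ ψ ∈ Γ, PForm.Sat v ψ) → PForm.Sat v φ

/-- Multimodal formulas with one box per action. -/
inductive MForm (Act α : Type) : Type
  | atom : α → MForm Act α
  | fls  : MForm Act α
  | not  : MForm Act α → MForm Act α
  | and  : MForm Act α → MForm Act α → MForm Act α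
  | or   : MForm Act α → MForm Act α → MForm Act α
  | imp  : MForm Act α → MForm Act α → MForm Act α
  | box  : Act → MForm Act α → MForm Act α

def PForm.toM {Act α : Type} : PForm α → MForm Act α
  | .atom p => .atom p
  | .fls => .fls
  | .not φ => .not φ.toM
  | .and φ ψ => .and φ.toM ψ.toM
  | .or φ ψ => .or φ.toM ψ.toM
  | .imp φ ψ => .imp φ.toM ψ.toM

/-- A Kripke model for multimodal K. -/
structure KModel (Act α : Type) where
  W : Type
  R : Act → W → W → Prop
  V : W → α → Prop

def MForm.Sat {Act α : Type} (M : KModel Act α) : M.W → MForm Act α → Prop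
  | w, atom p => M.V w p
  | _, fls => False
  | w, not φ => ¬ Sat M w φ
  | w, and φ ψ => Sat M w φ ∧ Sat M w ψ
  | w, or φ ψ => Sat M w φ ∨ Sat M w ψ
  | w, imp φ ψ => Sat M w φ → Sat M w ψ
  | w, box a φ => ∀ w', M.R a w w' → Sat M w' φ

/-- Global truth in a model. -/
def Glob {Act α : Type} (M : KModel Act α) (Φ : MForm Act α) : Prop :=
  ∀ w : M.W, MForm.Sat M w Φ

/-- Global consequence in multimodal K. -/
def ConsK {Act α : Type} (Γ : Set (MForm Act α)) (Φ : MForm Act α) : Prop :=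
  ∀ M : KModel Act α, (∀ Ψ ∈ Γ, Glob M Ψ) → Glob M Φ

/-- Literals. -/
abbrev Lit (α : Type) := α × Bool

def Lit.Sat {α : Type} (v : α → Prop) (l : Lit α) : Prop :=
  if l.2 then v l.1 else ¬ v l.1

/-- A dependence relation `⇝ ⊆ Act × Lit`. -/
abbrev Dep (Act α : Type) := Act → Lit α → Prop

/-- `⇝`-models: along `R a`, literals independent of `a` persist. -/
def IsDepModel {Act α : Type} (dep : Dep Act α) (M : KModel Act α) : Prop :=
  ∀ (a : Act) (w w' : M.W), M.R a w w' → ∀ p : α,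
    (¬ dep a (p, true) → ¬ M.V w p → ¬ M.V w' p) ∧
    (¬ dep a (p, false) → M.V w p → M.V w' p)

/-- Dependence-based global consequence. -/
def ConsDep {Act α : Type} (dep : Dep Act α) (Γ : Set (MForm Act α)) (Φ : MForm Act α) : Prop :=
  ∀ M : KModel Act α, IsDepModel dep M → (∀ Ψ ∈ Γ, Glob M Ψ) → Glob M Φ

/-- An action theory: static laws `S`, effect laws `E` (antecedent/consequent
pairs), executability laws `X` (antecedents), inexecutability laws `I`
(antecedents). -/
structure ActionTheory (Act α : Type) where
  S : Set (PForm α)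
  E : Act → Set (PForm α × PForm α)
  X : Act → Set (PForm α)
  I : Act → Set (PForm α)

/-- `⟨a⟩Φ`. -/
def MForm.diam {Act α : Type} (a : Act) (Φ : MForm Act α) : MForm Act α :=
  .not (.box a (.not Φ))

/-- Effect law `A → [a]C`. -/
def effLaw {Act α : Type} (a : Act) (e : PForm α × PForm α) : MForm Act α :=
  .imp e.1.toM (.box a e.2.toM)

/-- Executability law `A → ⟨a⟩⊤`. -/
def exeLaw {Act α : Type} (a : Act) (A : PForm α) : MForm Act α :=
  .imp A.toM (MForm.diam a (.not .fls))

/-- Inexecutability law `A → [a]⊥`. -/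
def inexLaw {Act α : Type} (a : Act) (A : PForm α) : MForm Act α :=
  .imp A.toM (.box a .fls)

variable {Act α : Type}

def staticForms (T : ActionTheory Act α) : Set (MForm Act α) := PForm.toM '' T.S
def effForms (T : ActionTheory Act α) (a : Act) : Set (MForm Act α) := effLaw a '' T.E a
def exeForms (T : ActionTheory Act α) (a : Act) : Set (MForm Act α) := exeLaw a '' T.X a
def inexForms (T : ActionTheory Act α) (a : Act) : Set (MForm Act α) := inexLaw a '' T.I a

/-- The action theory of the single action `a`:  `S ∪ E_a ∪ X_a ∪ I_a`. -/
def formsFor (T : ActionTheory Act α) (a : Act) : Set (MForm Act α) :=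
  staticForms T ∪ effForms T a ∪ exeForms T a ∪ inexForms T a

/-- The whole action theory:  `S ∪ E ∪ X ∪ I`. -/
def allForms (T : ActionTheory Act α) : Set (MForm Act α) :=
  staticForms T ∪ (⋃ a, effForms T a) ∪ (⋃ a, exeForms T a) ∪ (⋃ a, inexForms T a)

/-- Postulate PS for action `a`: no implicit static laws. -/
def PS (T : ActionTheory Act α) (dep : Dep Act α) (a : Act) : Prop :=
  ∀ φ : PForm α, ConsDep dep (formsFor T a) φ.toM → EntailsCl T.S φ

/-- Postulate PS*: no implicit static laws for the whole theory. -/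
def PSstar (T : ActionTheory Act α) (dep : Dep Act α) : Prop :=
  ∀ φ : PForm α, ConsDep dep (allForms T) φ.toM → EntailsCl T.S φ

/-- Postulate PI for action `a`: no implicit inexecutability laws. -/
def PIpost (T : ActionTheory Act α) (dep : Dep Act α) (a : Act) : Prop :=
  ∀ A : PForm α, ConsDep dep (formsFor T a) (inexLaw a A) →
    ConsK (staticForms T ∪ inexForms T a) (inexLaw a A)

/-- Postulate PI*: no implicit inexecutability laws for the whole theory. -/
def PIstar (T : ActionTheory Act α) (dep : Dep Act α) : Prop :=
  ∀ (a : Act) (A : PForm α), ConsDep dep (allForms T) (inexLaw a A) →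
    ConsK (staticForms T ∪ ⋃ a', inexForms T a') (inexLaw a A)


/-! Given a `⇝`-model `M` of `S ∪ E_a ∪ I_a`, keep only its `a`-transitions and add one world
for every valuation satisfying `S`, together with, for every action `b`, transitions into those
worlds that respect `I_b`, `E_b` and the frame condition of `⇝`. The transitions between old
worlds are untouched, so `A → [a]C` fails in the extension wherever it fails in `M`. The new
transitions satisfy every effect and inexecutability law by construction; the executability laws
need a new world after every world satisfying `S`, and this is where PS* enters: by PS* (and the
finiteness of the atoms) each valuation of `S` occurs in some `⇝`-model of the whole theory,
whose successor worlds supply the required valuations. -/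

theorem PForm.sat_toM (M : KModel Act α) (w : M.W) (φ : PForm α) :
    MForm.Sat M w φ.toM ↔ PForm.Sat (M.V w) φ := by
  induction φ <;> simp [PForm.toM, MForm.Sat, PForm.Sat, *]

theorem glob_toM_iff (M : KModel Act α) (φ : PForm α) :
    Glob M φ.toM ↔ ∀ w, PForm.Sat (M.V w) φ := by
  simp only [Glob, PForm.sat_toM]

theorem glob_effLaw_iff (M : KModel Act α) (b : Act) (e : PForm α × PForm α) :
    Glob M (effLaw b e) ↔
      ∀ w w', M.R b w w' → PForm.Sat (M.V w) e.1 → PForm.Sat (M.V w') e.2 := by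
  simp only [Glob, effLaw, MForm.Sat, PForm.sat_toM]
  exact ⟨fun h w w' hR h₁ => h w h₁ w' hR, fun h w h₁ w' hR => h w w' hR h₁⟩

theorem glob_exeLaw_iff (M : KModel Act α) (b : Act) (A : PForm α) :
    Glob M (exeLaw b A) ↔ ∀ w, PForm.Sat (M.V w) A → ∃ w', M.R b w w' := by
  simp [Glob, exeLaw, MForm.diam, MForm.Sat, PForm.sat_toM]

theorem glob_inexLaw_iff (M : KModel Act α) (b : Act) (A : PForm α) :
    Glob M (inexLaw b A) ↔ ∀ w, PForm.Sat (M.V w) A → ∀ w', ¬ M.R b w w' := by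
  simp [Glob, inexLaw, MForm.Sat, PForm.sat_toM]

theorem forall_glob_allForms_iff (M : KModel Act α) (T : ActionTheory Act α) :
    (∀ Ψ ∈ allForms T, Glob M Ψ) ↔
      (∀ φ ∈ T.S, Glob M φ.toM) ∧ (∀ b, ∀ e ∈ T.E b, Glob M (effLaw b e)) ∧
        (∀ b, ∀ A ∈ T.X b, Glob M (exeLaw b A)) ∧ (∀ b, ∀ A ∈ T.I b, Glob M (inexLaw b A)) := by
  simp only [allForms, staticForms, effForms, exeForms, inexForms, Set.mem_union, Set.mem_iUnion,
    or_imp, forall_and, forall_exists_index, Set.forall_mem_image, and_assoc]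
  rw [forall_comm (α := MForm Act α), forall_comm (α := MForm Act α), forall_comm (α := MForm Act α)]
  simp only [Set.forall_mem_image]

theorem forall_glob_local_iff (M : KModel Act α) (T : ActionTheory Act α) (a : Act) :
    (∀ Ψ ∈ staticForms T ∪ effForms T a ∪ inexForms T a, Glob M Ψ) ↔
      (∀ φ ∈ T.S, Glob M φ.toM) ∧ (∀ e ∈ T.E a, Glob M (effLaw a e)) ∧
        (∀ A ∈ T.I a, Glob M (inexLaw a A)) := by
  simp only [staticForms, effForms, inexForms, Set.mem_union, or_imp, forall_and,
    Set.forall_mem_image, and_assoc]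

theorem local_subset_allForms (T : ActionTheory Act α) (a : Act) :
    staticForms T ∪ effForms T a ∪ inexForms T a ⊆ allForms T := by
  rintro Ψ ((hS | hE) | hI)
  · exact .inl (.inl (.inl hS))
  · exact .inl (.inl (.inr (Set.mem_iUnion.2 ⟨a, hE⟩)))
  · exact .inr (Set.mem_iUnion.2 ⟨a, hI⟩)

theorem ConsDep.mono {dep : Dep Act α} {Γ Δ : Set (MForm Act α)} {Φ : MForm Act α}
    (hΓΔ : Γ ⊆ Δ) (h : ConsDep dep Γ Φ) : ConsDep dep Δ Φ :=
  fun M hM hΔ => h M hM fun Ψ hΨ => hΔ Ψ (hΓΔ hΨ)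

section CharacteristicFormula

def PForm.conj : List (PForm α) → PForm α
  | [] => .not .fls
  | φ :: l => .and φ (conj l)

theorem PForm.sat_conj (v : α → Prop) (l : List (PForm α)) :
    PForm.Sat v (conj l) ↔ ∀ φ ∈ l, PForm.Sat v φ := by
  induction l <;> simp [conj, PForm.Sat, *]

open Classical in
noncomputable def PForm.literal (v : α → Prop) (p : α) : PForm α :=
  if v p then .atom p else .not (.atom p)

theorem PForm.sat_literal (u v : α → Prop) (p : α) :
    PForm.Sat u (literal v p) ↔ (u p ↔ v p) := by
  by_cases h : v p <;> simp [literal, PForm.Sat, h]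

noncomputable def PForm.charForm [Fintype α] (v : α → Prop) : PForm α :=
  conj (Finset.univ.toList.map (literal v))

theorem PForm.sat_charForm [Fintype α] (u v : α → Prop) :
    PForm.Sat u (charForm v) ↔ u = v := by
  simp [charForm, sat_conj, sat_literal, funext_iff]

end CharacteristicFormula

section Extension

variable (T : ActionTheory Act α) (dep : Dep Act α)

def StaticVal : Type := {v : α → Prop // ∀ φ ∈ T.S, PForm.Sat v φ}

structure IsCanonicalSucc (b : Act) (v v' : α → Prop) : Prop where
  not_inex : ∀ A ∈ T.I b, ¬ PForm.Sat v A
  eff : ∀ e ∈ T.E b, PForm.Sat v e.1 → PForm.Sat v' e.2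
  frame : ∀ p, (¬ dep b (p, true) → ¬ v p → ¬ v' p) ∧ (¬ dep b (p, false) → v p → v' p)

variable {T dep}

theorem isCanonicalSucc_of_R {N : KModel Act α} (hN : IsDepModel dep N)
    (hG : ∀ Ψ ∈ allForms T, Glob N Ψ) {b : Act} {x y : N.W} (hxy : N.R b x y) :
    IsCanonicalSucc T dep b (N.V x) (N.V y) := by
  obtain ⟨-, hE, -, hI⟩ := (forall_glob_allForms_iff N T).1 hG
  exact
    { not_inex := fun A hA hxA => (glob_inexLaw_iff N b A).1 (hI b A hA) x hxA y hxy
      eff := fun e he => (glob_effLaw_iff N b e).1 (hE b e he) x y hxy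
      frame := hN b x y hxy }

/-- Under PS*, every valuation of the static laws is realised in some `⇝`-model of the whole
theory: otherwise the negation of its characteristic formula would be an implicit static law. -/
theorem exists_world_eq_of_PSstar [Fintype α] (hPS : PSstar T dep) {v : α → Prop}
    (hv : ∀ φ ∈ T.S, PForm.Sat v φ) :
    ∃ N : KModel Act α, IsDepModel dep N ∧ (∀ Ψ ∈ allForms T, Glob N Ψ) ∧ ∃ x, N.V x = v := by
  by_contra! hno
  have hcons : ConsDep dep (allForms T) (PForm.not (PForm.charForm v)).toM := fun N hN hG => by
    rw [glob_toM_iff]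
    intro x
    simpa [PForm.Sat, PForm.sat_charForm] using hno N hN hG x
  simpa [PForm.Sat, PForm.sat_charForm] using hPS _ hcons v hv

theorem exists_isCanonicalSucc [Fintype α] (hPS : PSstar T dep) {b : Act} {A : PForm α}
    (hA : A ∈ T.X b) {v : α → Prop} (hv : ∀ φ ∈ T.S, PForm.Sat v φ) (hvA : PForm.Sat v A) :
    ∃ v' : StaticVal T, IsCanonicalSucc T dep b v v'.1 := by
  obtain ⟨N, hN, hG, x, rfl⟩ := exists_world_eq_of_PSstar hPS hv
  obtain ⟨hS, -, hX, -⟩ := (forall_glob_allForms_iff N T).1 hG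
  obtain ⟨y, hxy⟩ := (glob_exeLaw_iff N b A).1 (hX b A hA) x hvA
  exact ⟨⟨N.V y, fun φ hφ => (glob_toM_iff N φ).1 (hS φ hφ) y⟩, isCanonicalSucc_of_R hN hG hxy⟩

variable (T dep)

def extModel (a : Act) (M : KModel Act α) : KModel Act α where
  W := M.W ⊕ StaticVal T
  R b u u' := match u' with
    | .inl w' => ∃ w, u = .inl w ∧ b = a ∧ M.R a w w'
    | .inr v' => IsCanonicalSucc T dep b (Sum.elim M.V Subtype.val u) v'.1
  V := Sum.elim M.V Subtype.val

variable {T dep} {a : Act} {M : KModel Act α}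

theorem extModel_isDepModel (hM : IsDepModel dep M) : IsDepModel dep (extModel T dep a M) := by
  rintro b u (w' | v') hR p
  · obtain ⟨w, rfl, rfl, hw⟩ := hR
    exact hM b w w' hw p
  · exact hR.frame p

theorem glob_extModel_static (hS : ∀ φ ∈ T.S, Glob M φ.toM) :
    ∀ φ ∈ T.S, Glob (extModel T dep a M) φ.toM := by
  intro φ hφ
  rw [glob_toM_iff]
  rintro (w | v)
  · exact (glob_toM_iff M φ).1 (hS φ hφ) w
  · exact v.2 φ hφ

theorem glob_extModel_eff (hE : ∀ e ∈ T.E a, Glob M (effLaw a e)) :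
    ∀ b, ∀ e ∈ T.E b, Glob (extModel T dep a M) (effLaw b e) := by
  intro b e he
  rw [glob_effLaw_iff]
  rintro u (w' | v') hR
  · obtain ⟨w, rfl, rfl, hw⟩ := hR
    exact (glob_effLaw_iff M b e).1 (hE e he) w w' hw
  · exact hR.eff e he

theorem glob_extModel_inex (hI : ∀ A ∈ T.I a, Glob M (inexLaw a A)) :
    ∀ b, ∀ A ∈ T.I b, Glob (extModel T dep a M) (inexLaw b A) := by
  intro b A hA
  rw [glob_inexLaw_iff]
  rintro u hA' (w' | v') hR
  · obtain ⟨w, rfl, rfl, hw⟩ := hR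
    exact (glob_inexLaw_iff M b A).1 (hI A hA) w hA' w' hw
  · exact hR.not_inex A hA hA'

theorem glob_extModel_exe [Fintype α] (hPS : PSstar T dep) (hS : ∀ φ ∈ T.S, Glob M φ.toM) :
    ∀ b, ∀ A ∈ T.X b, Glob (extModel T dep a M) (exeLaw b A) := by
  intro b A hA
  rw [glob_exeLaw_iff]
  intro u hu
  have hSu := fun φ hφ => (glob_toM_iff _ φ).1 (glob_extModel_static (dep := dep) hS φ hφ) u
  obtain ⟨v', hv'⟩ := exists_isCanonicalSucc hPS hA hSu hu
  exact ⟨.inr v', hv'⟩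

theorem forall_glob_extModel [Fintype α] (hPS : PSstar T dep)
    (hM : ∀ Ψ ∈ staticForms T ∪ effForms T a ∪ inexForms T a, Glob M Ψ) :
    ∀ Ψ ∈ allForms T, Glob (extModel T dep a M) Ψ := by
  obtain ⟨hS, hE, hI⟩ := (forall_glob_local_iff M T a).1 hM
  exact (forall_glob_allForms_iff _ T).2
    ⟨glob_extModel_static hS, glob_extModel_eff hE, glob_extModel_exe hPS hS,
      glob_extModel_inex hI⟩

end Extension

theorem consDep_effLaw_of_allForms [Fintype α] {T : ActionTheory Act α} {dep : Dep Act α}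
    (hPS : PSstar T dep) {a : Act} {e : PForm α × PForm α}
    (h : ConsDep dep (allForms T) (effLaw a e)) :
    ConsDep dep (staticForms T ∪ effForms T a ∪ inexForms T a) (effLaw a e) := by
  intro M hM hΓ
  have hext := h _ (extModel_isDepModel hM) (forall_glob_extModel hPS hΓ)
  rw [glob_effLaw_iff] at hext ⊢
  intro w w' hw
  exact hext (.inl w) (.inl w') ⟨w, rfl, rfl, hw⟩

theorem stmt_11_general [Fintype α] (T : ActionTheory Act α) (dep : Dep Act α)
    (hPS : PSstar T dep) (a : Act) (A C : PForm α) :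
    ConsDep dep (allForms T) (effLaw a (A, C)) ↔
    ConsDep dep (staticForms T ∪ effForms T a ∪ inexForms T a) (effLaw a (A, C)) :=
  ⟨consDep_effLaw_of_allForms hPS, ConsDep.mono (local_subset_allForms T a)⟩

/-- modularity inside the effect laws: under PS*, deducing an
effect law for `a` only needs `S`, `E_a` and `I_a`. -/
theorem stmt_11 [Fintype Act] [Fintype α] (T : ActionTheory Act α) (dep : Dep Act α)
    (hPS : PSstar T dep) (a : Act) (A C : PForm α) :
    ConsDep dep (allForms T) (effLaw a (A, C)) ↔
    ConsDep dep (staticForms T ∪ effForms T a ∪ inexForms T a) (effLaw a (A, C)) :=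
  stmt_11_general T dep hPS a A C
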